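/- arXiv:math/0211426 — 3 statements merged into one kernel-verified Lean document; each statement's English description precedes it below -/
import Mathlib

section
/- Let (a_n^+), (a_n^-), (b_n^+), (b_n^-) be sequences of integers (indexed by n ≥ 1), and set a_n = a_n^+ + a_n^-, b_n = b_n^+ + b_n^-, A_n = 1 - Σ_{i=1}^n a_i (with A_0 = 1), B_n = 1 - Σ_{i=1}^n b_i (with B_0 = 1). Define the modified coefficients Ã_n^± = A_n + a_n^± and B̃_n^± = B_n + b_n^±, and define c_n^± by c_n^+ = a_n^+ b_n^+ + a_n^+ B_n + A_n b_n^+ + Σ_{i=1}^n (-1)^{n-i}(a_i^+ b_i^- + a_i^- b_i^+) and c_n^- = a_n^- b_n^- + a_n^- B_n + A_n b_n^- + Σ_{i=1}^n (-1)^{n-i}(a_i^+ b_i^- + a_i^- b_i^+). Let c_n = c_n^+ + c_n^-, C_n = 1 - Σ_{i=1}^n c_i, and C̃_n^± = C_n + c_n^±. Then C̃_n^+ = Ã_n^+ · B̃_n^+ and C̃_n^- = Ã_n^- · B̃_n^- for all n ≥ 1. -/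
/-!
Writing `d_i = a_i⁺ b_i⁻ + a_i⁻ b_i⁺` and `D_n = ∑_{i ≤ n} (-1)^(n-i) d_i`, one has `D_n = d_n - D_{n-1}`,
and `a_n b_n = a_n⁺ b_n⁺ + a_n⁻ b_n⁻ + d_n`. Together these turn `c_n = c_n⁺ + c_n⁻` into the
telescoping difference `(A_{n-1} B_{n-1} - D_{n-1}) - (A_n B_n - D_n)`, so `C_n = A_n B_n - D_n`.
Adding `c_n^±` to this completes the products `(A_n + a_n^±)(B_n + b_n^±)`.
-/

open Finset

lemma sub_sum_Icc_succ {G : Type*} [AddCommGroup G] (x : G) (f : ℕ → G) (n : ℕ) :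
    x - ∑ i ∈ Icc 1 (n + 1), f i = (x - ∑ i ∈ Icc 1 n, f i) - f (n + 1) := by
  rw [sum_Icc_succ_top (by omega)]
  abel

lemma sub_sum_Icc_eq_of_telescoping {G : Type*} [AddCommGroup G] {F c : ℕ → G}
    (hc : ∀ n, c (n + 1) = F n - F (n + 1)) (n : ℕ) : F 0 - ∑ i ∈ Icc 1 n, c i = F n := by
  induction n with
  | zero => simp
  | succ n ih => rw [sub_sum_Icc_succ, ih, hc]; abel

lemma alternating_sum_Icc_succ {R : Type*} [CommRing R] (f : ℕ → R) (n : ℕ) :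
    ∑ i ∈ Icc 1 (n + 1), (-1 : R) ^ (n + 1 - i) * f i =
      f (n + 1) - ∑ i ∈ Icc 1 n, (-1 : R) ^ (n - i) * f i := by
  rw [sum_Icc_succ_top (by omega), Nat.sub_self, pow_zero, one_mul, sub_eq_neg_add,
    ← sum_neg_distrib]
  congr 1
  refine sum_congr rfl fun i hi => ?_
  rw [Nat.succ_sub (mem_Icc.mp hi).2, pow_succ]
  ring

/-- Equivalence of the two forms of the Thom–Sebastiani formulae:
the term-by-term formulae for `c_n^±` imply the multiplicative formulae
`C̃_n^± = Ã_n^± · B̃_n^±` for the modified coefficients. -/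
theorem stmt_1 (ap am bp bm : ℕ → ℤ) (A B : ℕ → ℤ)
    (hA : ∀ n : ℕ, A n = 1 - ∑ i ∈ Finset.Icc 1 n, (ap i + am i))
    (hB : ∀ n : ℕ, B n = 1 - ∑ i ∈ Finset.Icc 1 n, (bp i + bm i))
    (cp cm : ℕ → ℤ)
    (hcp : ∀ n : ℕ, cp n = ap n * bp n + ap n * B n + A n * bp n +
      ∑ i ∈ Finset.Icc 1 n, (-1 : ℤ) ^ (n - i) * (ap i * bm i + am i * bp i))
    (hcm : ∀ n : ℕ, cm n = am n * bm n + am n * B n + A n * bm n +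
      ∑ i ∈ Finset.Icc 1 n, (-1 : ℤ) ^ (n - i) * (ap i * bm i + am i * bp i))
    (C : ℕ → ℤ)
    (hC : ∀ n : ℕ, C n = 1 - ∑ i ∈ Finset.Icc 1 n, (cp i + cm i)) :
    ∀ n : ℕ, 1 ≤ n →
      C n + cp n = (A n + ap n) * (B n + bp n) ∧
      C n + cm n = (A n + am n) * (B n + bm n) := by
  obtain ⟨D, hD⟩ : ∃ D : ℕ → ℤ, ∀ n,
      D n = ∑ i ∈ Icc 1 n, (-1 : ℤ) ^ (n - i) * (ap i * bm i + am i * bp i) := ⟨_, fun _ => rfl⟩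
  simp only [← hD] at hcp hcm
  have hD_succ (n : ℕ) : D (n + 1) = ap (n + 1) * bm (n + 1) + am (n + 1) * bp (n + 1) - D n := by
    rw [hD, hD, alternating_sum_Icc_succ]
  have hA_succ (n : ℕ) : A (n + 1) = A n - (ap (n + 1) + am (n + 1)) := by
    rw [hA, hA, sub_sum_Icc_succ]
  have hB_succ (n : ℕ) : B (n + 1) = B n - (bp (n + 1) + bm (n + 1)) := by
    rw [hB, hB, sub_sum_Icc_succ]
  have hc_telescoping (n : ℕ) :
      cp (n + 1) + cm (n + 1) = (A n * B n - D n) - (A (n + 1) * B (n + 1) - D (n + 1)) := by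
    rw [hcp, hcm, hD_succ, hA_succ, hB_succ]
    ring
  have hC_eq (n : ℕ) : C n = A n * B n - D n := by
    rw [hC, ← sub_sum_Icc_eq_of_telescoping (F := fun n => A n * B n - D n)
      (c := fun i => cp i + cm i) hc_telescoping n]
    simp [hA, hB, hD]
  intro n _
  exact ⟨by rw [hC_eq, hcp]; ring, by rw [hC_eq, hcm]; ring⟩
end

section
/- Let m be an even positive integer. Define sequences Ã_n^+ and Ã_n^- for n ≥ 1 by: Ã_n^+ = (-1)^q where n = qm + s with 1 ≤ s ≤ m (so Ã_n^+ = 1 for 1 ≤ n ≤ m, = -1 for m+1 ≤ n ≤ 2m, etc.), and Ã_n^- = (-1)^q where n = qm + s with 0 ≤ s ≤ m-1 and n ≥ 1. Then these are the modified zeta function coefficients of f(x) = x^m; in particular Ã_n^+ ≠ 0 and Ã_n^- ≠ 0 for all n ≥ 1. -/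
open Classical

/-!
Every jump `a_i^+ = ±2` occurs at a multiple `i = km` of `m` and flips the sign of the partial
sums, so `A_n = (-1)^⌊n/m⌋` by telescoping. Adding `a_n^+` undoes the last flip exactly when
`m ∣ n`, which gives `Ã_n^+ = (-1)^⌊(n-1)/m⌋`, while `Ã_n^- = A_n`.
-/

namespace ModifiedZeta

/-- The coefficient `a_i^+` of the signed zeta function of `x^m`. -/
def signJump (m i : ℕ) : ℤ := if m ∣ i then 2 * (-1) ^ (i / m + 1) else 0

lemma exists_pos_mul_eq_iff_dvd {m n : ℕ} (hn : 0 < n) : (∃ k, 0 < k ∧ n = k * m) ↔ m ∣ n := by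
  constructor
  · rintro ⟨k, -, rfl⟩
    exact Dvd.intro_left k rfl
  · rintro ⟨k, rfl⟩
    exact ⟨k, Nat.pos_of_mul_pos_left hn, mul_comm m k⟩

lemma neg_one_pow_div_sub_succ (m n : ℕ) :
    (-1 : ℤ) ^ (n / m) - (-1) ^ ((n + 1) / m) = signJump m (n + 1) := by
  unfold signJump
  by_cases hd : m ∣ n + 1 <;> simp only [Nat.succ_div, hd, if_true, if_false] <;> ring

lemma sum_Icc_signJump (m n : ℕ) :
    ∑ i ∈ Finset.Icc 1 n, signJump m i = 1 - (-1) ^ (n / m) := by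
  induction n with
  | zero => simp
  | succ n ih =>
    rw [Finset.sum_Icc_succ_top (by omega), ih, ← neg_one_pow_div_sub_succ]
    ring

end ModifiedZeta

open ModifiedZeta in
theorem stmt_3_general (m : ℕ)
    (ap am A : ℕ → ℤ)
    (hap : ∀ n : ℕ, ap n = if ∃ k : ℕ, 0 < k ∧ n = k * m then 2 * (-1) ^ (n / m + 1) else 0)
    (ham : ∀ n : ℕ, am n = 0)
    (hA : ∀ n : ℕ, A n = 1 - ∑ i ∈ Finset.Icc 1 n, (ap i + am i)) :
    ∀ n : ℕ, 1 ≤ n →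
      A n + ap n = (-1) ^ ((n - 1) / m) ∧
      A n + am n = (-1) ^ (n / m) ∧
      A n + ap n ≠ 0 ∧ A n + am n ≠ 0 := by
  have hjump : ∀ n, 1 ≤ n → ap n = signJump m n := fun n hn => by
    simp only [hap, signJump, exists_pos_mul_eq_iff_dvd hn]
  have hApow : ∀ n, A n = (-1) ^ (n / m) := fun n => by
    have hterm : ∀ i ∈ Finset.Icc 1 n, ap i + am i = signJump m i := fun i hi => by
      rw [ham, add_zero, hjump i (Finset.mem_Icc.1 hi).1]
    rw [hA, Finset.sum_congr rfl hterm, sum_Icc_signJump, sub_sub_cancel]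
  intro n hn
  obtain ⟨n, rfl⟩ : ∃ k, n = k + 1 := ⟨n - 1, by omega⟩
  have hplus : A (n + 1) + ap (n + 1) = (-1) ^ ((n + 1 - 1) / m) := by
    rw [Nat.add_sub_cancel, hjump _ hn, hApow, ← neg_one_pow_div_sub_succ]
    ring
  have hminus : A (n + 1) + am (n + 1) = (-1) ^ ((n + 1) / m) := by
    rw [ham, add_zero, hApow]
  exact ⟨hplus, hminus, hplus ▸ pow_ne_zero _ (by norm_num), hminus ▸ pow_ne_zero _ (by norm_num)⟩

/-- The modified zeta function coefficients of `f(x) = x^m`, `m` even: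
`Ã_n^+ = (-1)^((n-1)/m)` and `Ã_n^- = (-1)^(n/m)`; in particular they
are never zero. -/
theorem stmt_3 (m : ℕ) (hm : 0 < m) (hme : Even m)
    (ap am A : ℕ → ℤ)
    (hap : ∀ n : ℕ, ap n = if ∃ k : ℕ, 0 < k ∧ n = k * m then 2 * (-1) ^ (n / m + 1) else 0)
    (ham : ∀ n : ℕ, am n = 0)
    (hA : ∀ n : ℕ, A n = 1 - ∑ i ∈ Finset.Icc 1 n, (ap i + am i)) :
    ∀ n : ℕ, 1 ≤ n →
      A n + ap n = (-1) ^ ((n - 1) / m) ∧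
      A n + am n = (-1) ^ (n / m) ∧
      A n + ap n ≠ 0 ∧ A n + am n ≠ 0 :=
  stmt_3_general m ap am A hap ham hA
end

section
/- Let h(t) = a_k t^k + a_{k+1} t^{k+1} + ⋯ be a formal power series over ℝ with a_k ≠ 0, and let i ≥ 1. Then for every α ∈ ℝ, the reparametrized series h(t + α t^{i+1}) has the form a_k t^k + ⋯ + a_{k+i−1} t^{k+i−1} + (a_k · k · α + a_{k+i}) t^{k+i} + (higher order terms); consequently, as α ranges over ℝ, the coefficient of t^{k+i} in h(t + α t^{i+1}) takes every real value. -/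
/-!
Write `h = t^k g` and `t + α t^(i+1) = t u` with `u = 1 + α t^i`, so that
`h(t + α t^(i+1)) = t^k · u^k · g(t + α t^(i+1))`. Modulo `t^(i+1)` we have
`g(t + α t^(i+1)) ≡ g` (as `q - r` divides `g(q) - g(r)`) and `u^k ≡ 1 + k α t^i` (binomial
expansion, since `2i ≥ i + 1`). Hence up to degree `k + i` the reparametrized series agrees
with `t^k (1 + k α t^i) g`, whose coefficient of `t^(k+i)` is `a_{k+i} + k α a_k`.
-/

namespace Polynomial

variable {R : Type*} [CommRing R]

theorem coeff_eq_of_X_pow_dvd_sub {p q : R[X]} {n j : ℕ} (h : X ^ n ∣ p - q) (hj : j < n) :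
    p.coeff j = q.coeff j :=
  sub_eq_zero.mp (by rw [← coeff_sub]; exact X_pow_dvd_iff.mp h j hj)

theorem sub_dvd_comp_sub (p q r : R[X]) : q - r ∣ p.comp q - p.comp r := by
  simpa only [comp, eval_map] using sub_dvd_eval_sub q r (p.map C)

theorem X_pow_succ_dvd_comp_X_add_C_mul_X_pow_succ_sub (p : R[X]) (α : R) (i : ℕ) :
    X ^ (i + 1) ∣ p.comp (X + C α * X ^ (i + 1)) - p := by
  have h := sub_dvd_comp_sub p (X + C α * X ^ (i + 1)) X
  rw [comp_X, add_sub_cancel_left] at h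
  exact (dvd_mul_left _ _).trans h

theorem X_pow_succ_dvd_one_add_C_mul_X_pow_pow_sub {i : ℕ} (hi : 1 ≤ i) (α : R) (n : ℕ) :
    X ^ (i + 1) ∣ (1 + C α * X ^ i) ^ n - (1 + C (n * α) * X ^ i) := by
  have hsq : X ^ (i + 1) ∣ (C α * X ^ i) ^ 2 :=
    (pow_dvd_pow X (by omega : i + 1 ≤ i * 2)).trans
      (by rw [mul_pow, ← pow_mul]; exact dvd_mul_left _ _)
  convert hsq.trans (sq_dvd_add_pow_sub_sub (C α * X ^ i) 1 n) using 1
  rw [add_comm (1 : R[X]), C_mul, C_eq_natCast]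
  ring

theorem X_pow_mul_comp_X_add_C_mul_X_pow_succ (g : R[X]) (α : R) (i k : ℕ) :
    (X ^ k * g).comp (X + C α * X ^ (i + 1)) =
      X ^ k * ((1 + C α * X ^ i) ^ k * g.comp (X + C α * X ^ (i + 1))) := by
  rw [mul_comp, X_pow_comp, show X + C α * X ^ (i + 1) = X * (1 + C α * X ^ i) by ring, mul_pow,
    mul_assoc]

theorem coeff_X_pow_mul_comp_X_add_C_mul_X_pow_succ {i : ℕ} (hi : 1 ≤ i) (g : R[X]) (α : R)
    (k : ℕ) {j : ℕ} (hj : j ≤ i) :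
    ((X ^ k * g).comp (X + C α * X ^ (i + 1))).coeff (k + j) =
      ((1 + C (k * α) * X ^ i) * g).coeff j := by
  have hcong : X ^ (i + 1) ∣ (1 + C α * X ^ i) ^ k * g.comp (X + C α * X ^ (i + 1)) -
      (1 + C (k * α) * X ^ i) * g := by
    rw [show ∀ a b c d : R[X], a * b - c * d = a * (b - d) + (a - c) * d by intros; ring]
    exact dvd_add (dvd_mul_of_dvd_right (X_pow_succ_dvd_comp_X_add_C_mul_X_pow_succ_sub g α i) _)
      (dvd_mul_of_dvd_left (X_pow_succ_dvd_one_add_C_mul_X_pow_pow_sub hi α k) _)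
  rw [X_pow_mul_comp_X_add_C_mul_X_pow_succ, coeff_X_pow_mul', if_pos (by omega),
    Nat.add_sub_cancel_left]
  exact coeff_eq_of_X_pow_dvd_sub hcong (by omega)

theorem coeff_one_add_C_mul_X_pow_mul (g : R[X]) (c : R) (i j : ℕ) :
    ((1 + C c * X ^ i) * g).coeff j = g.coeff j + c * if i ≤ j then g.coeff (j - i) else 0 := by
  rw [add_mul, one_mul, coeff_add, mul_assoc, coeff_C_mul, coeff_X_pow_mul']

end Polynomial

open Polynomial

/-- The reparametrization `t ↦ t + α t^(i+1)` applied to a series of order `k`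
with leading coefficient `a_k ≠ 0` leaves the coefficients in degrees
`< k + i` unchanged and changes the degree `k + i` coefficient to
`a_k·k·α + a_{k+i}`; as `α` ranges over `ℝ`, this coefficient takes every
real value. -/
theorem stmt_16 (h : Polynomial ℝ) (k i : ℕ) (hk : 1 ≤ k) (hi : 1 ≤ i)
    (ak : ℝ) (hak : h.coeff k = ak) (h0 : ak ≠ 0)
    (hlow : ∀ j : ℕ, j < k → h.coeff j = 0) :
    (∀ α : ℝ,
      (∀ j : ℕ, j < k →
        (h.comp (Polynomial.X + Polynomial.C α * Polynomial.X ^ (i + 1))).coeff j = 0) ∧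
      (∀ j : ℕ, j < i →
        (h.comp (Polynomial.X + Polynomial.C α * Polynomial.X ^ (i + 1))).coeff (k + j) =
          h.coeff (k + j)) ∧
      (h.comp (Polynomial.X + Polynomial.C α * Polynomial.X ^ (i + 1))).coeff (k + i) =
        ak * k * α + h.coeff (k + i)) ∧
    (∀ v : ℝ, ∃ α : ℝ,
      (h.comp (Polynomial.X + Polynomial.C α * Polynomial.X ^ (i + 1))).coeff (k + i) = v) := by
  obtain ⟨g, rfl⟩ : X ^ k ∣ h := X_pow_dvd_iff.mpr hlow
  have hshift : ∀ j, (X ^ k * g).coeff (k + j) = g.coeff j := fun j => by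
    rw [coeff_X_pow_mul', if_pos (by omega), Nat.add_sub_cancel_left]
  have htop : ∀ α : ℝ, ((X ^ k * g).comp (X + C α * X ^ (i + 1))).coeff (k + i) =
      ak * k * α + (X ^ k * g).coeff (k + i) := fun α => by
    rw [coeff_X_pow_mul_comp_X_add_C_mul_X_pow_succ hi g α k le_rfl, coeff_one_add_C_mul_X_pow_mul,
      if_pos le_rfl, Nat.sub_self, hshift, ← hshift 0, add_zero, hak]
    ring
  refine ⟨fun α => ⟨fun j hj => ?_, fun j hj => ?_, htop α⟩,
    fun v => ⟨(v - (X ^ k * g).coeff (k + i)) / (ak * k), ?_⟩⟩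
  · rw [X_pow_mul_comp_X_add_C_mul_X_pow_succ]
    exact X_pow_dvd_iff.mp (dvd_mul_right _ _) j hj
  · rw [coeff_X_pow_mul_comp_X_add_C_mul_X_pow_succ hi g α k hj.le, coeff_one_add_C_mul_X_pow_mul,
      if_neg (by omega), mul_zero, add_zero, hshift]
  · have hk0 : (k : ℝ) ≠ 0 := by positivity
    rw [htop]
    field_simp
    ring
end
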